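/- If y ∈ X satisfies d^φ(y,x) < 1/(8(1+d(m,x))), then d(m,y) < 1 + 2·d(m,x). -/

import Mathlib

/-!
Take a chain from `y` to `x` whose `δ^φ`-length `s` is below `1/(8(1+d(m,x)))`. Walking it
backwards from `x`, every point stays within `d(m,x) + s` of `m`, so every shortcut term
`1/(1+d(m,·))` exceeds the whole length; hence each step is an honest `d`-step and the triangle
inequality gives `d(m,y) ≤ d(m,x) + s`.
-/

/-- δ^φ(x,y) = min{d(x,y), 1/(1+d(m,x)) + φ(x,y) + 1/(1+d(m,y))}. -/
noncomputable def deltaPhi {X : Type*} [MetricSpace X] (m : X) (φ : X → X → ℝ) (x y : X) : ℝ :=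
  min (dist x y) (1 / (1 + dist m x) + φ x y + 1 / (1 + dist m y))

/-- d^φ(x,y): infimum over finite chains x = x₀, ..., xₙ = y of Σ δ^φ(x_{i-1}, x_i). -/
noncomputable def dPhi {X : Type*} [MetricSpace X] (m : X) (φ : X → X → ℝ) (x y : X) : ℝ :=
  sInf { r : ℝ | ∃ (n : ℕ) (f : ℕ → X), 1 ≤ n ∧ f 0 = x ∧ f n = y ∧
    r = ∑ i ∈ Finset.range n, deltaPhi m φ (f i) (f (i + 1)) }

open Finset

section

variable {X : Type*} [MetricSpace X] (m : X) {φ : X → X → ℝ}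

lemma deltaPhi_nonneg (hφ : ∀ x y, 0 ≤ φ x y) (a b : X) : 0 ≤ deltaPhi m φ a b := by
  have := hφ a b
  unfold deltaPhi
  exact le_min dist_nonneg (by positivity)

lemma deltaPhi_eq_dist_of_lt (hφ : ∀ x y, 0 ≤ φ x y) {a b : X}
    (h : deltaPhi m φ a b < 1 / (1 + dist m b)) : deltaPhi m φ a b = dist a b := by
  refine min_eq_left (le_of_not_ge fun hle => h.not_ge ?_)
  rw [deltaPhi, min_eq_right hle]
  have := hφ a b
  have : 0 ≤ 1 / (1 + dist m a) := by positivity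
  linarith

lemma dist_le_add_sum_deltaPhi (hφ : ∀ x y, 0 ≤ φ x y) (n : ℕ) (f : ℕ → X)
    (h : ∑ i ∈ range n, deltaPhi m φ (f i) (f (i + 1)) < 1 / (2 + dist m (f n))) :
    dist m (f 0) ≤ dist m (f n) + ∑ i ∈ range n, deltaPhi m φ (f i) (f (i + 1)) := by
  induction n generalizing f with
  | zero => simp
  | succ n ih =>
    rw [sum_range_succ', zero_add] at h ⊢
    set s := ∑ i ∈ range n, deltaPhi m φ (f (i + 1)) (f (i + 1 + 1))
    have hfirst := deltaPhi_nonneg m hφ (f 0) (f 1)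
    have hs : 0 ≤ s := sum_nonneg fun i _ => deltaPhi_nonneg m hφ _ _
    have htail : dist m (f 1) ≤ dist m (f (n + 1)) + s := ih (fun i => f (i + 1)) (by linarith)
    have hR := dist_nonneg (x := m) (y := f (n + 1))
    have hs_half : s < 1 / 2 := by
      calc s < 1 / (2 + dist m (f (n + 1))) := by linarith
        _ ≤ 1 / 2 := by gcongr; linarith
    have hstep : deltaPhi m φ (f 0) (f 1) = dist (f 0) (f 1) := by
      refine deltaPhi_eq_dist_of_lt m hφ ?_
      calc deltaPhi m φ (f 0) (f 1) < 1 / (2 + dist m (f (n + 1))) := by linarith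
        _ ≤ 1 / (1 + dist m (f 1)) := one_div_le_one_div_of_le (by positivity) (by linarith)
    have := dist_triangle_right m (f 0) (f 1)
    linarith

lemma exists_chain_of_dPhi_lt {x y : X} {c : ℝ}
    (h : dPhi m φ y x < c) :
    ∃ (n : ℕ) (f : ℕ → X), f 0 = y ∧ f n = x ∧
      ∑ i ∈ range n, deltaPhi m φ (f i) (f (i + 1)) < c := by
  obtain ⟨_, ⟨n, f, -, hf0, hfn, rfl⟩, hlt⟩ :=
    exists_lt_of_csInf_lt
      (by exact ⟨_, 1, fun i => if i = 0 then y else x, le_rfl, rfl, rfl, rfl⟩) h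
  exact ⟨n, f, hf0, hfn, hlt⟩

end

theorem stmt8_general {X : Type*} [MetricSpace X] (m : X) (φ : X → X → ℝ)
    (hφ : ∀ x y, 0 ≤ φ x y)
    (x y : X) (h : dPhi m φ y x < 1 / (8 * (1 + dist m x))) :
    dist m y < 1 + 2 * dist m x := by
  obtain ⟨n, f, rfl, rfl, hsum⟩ := exists_chain_of_dPhi_lt m h
  have hR := dist_nonneg (x := m) (y := f n)
  have hsmall : 1 / (8 * (1 + dist m (f n))) ≤ 1 / (2 + dist m (f n)) := by
    gcongr; linarith
  have hle_one : 1 / (8 * (1 + dist m (f n))) ≤ 1 := by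
    rw [div_le_one (by positivity)]; linarith
  have := dist_le_add_sum_deltaPhi m hφ n f (hsum.trans_le hsmall)
  linarith

theorem stmt8 {X : Type*} [MetricSpace X] (m : X) (φ : X → X → ℝ)
    (hφ : ∀ x y, 0 ≤ φ x y) (hsym : ∀ x y, φ x y = φ y x)
    (x y : X) (h : dPhi m φ y x < 1 / (8 * (1 + dist m x))) :
    dist m y < 1 + 2 * dist m x :=
  stmt8_general m φ hφ x y h
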